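/- Let r > 0, η > 0, α > 0, Λ₀ ≥ 2η, and δ > 0 sufficiently small (depending on α, η, Λ₀). For 0 < h ≤ δ and integers 2 ≤ i ≤ ⌊δ/h⌋ + 1, let l_{h,i} = Λ₀h(i-1) + αh^{1/4}, d_{h,i} = 2ηh(i-1) + αh^{1/2}, a_{h,i} = Λ₀^{1/2}/l_{h,i}, and φ_{h,i}(t) = (a_{h,i}/2)(t² - d_{h,i}²) + l_{h,i}. Then |φ_{h,i}(t) - φ_{h,i-1}(t)| ≤ 2Λ₀ h for all t ∈ [-d_{h,i-1}, d_{h,i-1}]. -/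

import Mathlib

/-!
`φ_{h,i}` is the parabola of curvature `a = √Λ₀ / l` that takes the value `l` at `±d`. Passing
from `i - 1` to `i` raises `l` by `λ = Λ₀ h`, raises `d` by `μ = 2η h ≤ λ` and lowers `a` by
`√Λ₀ λ / (l l')`. Termwise, `2η ≤ √Λ₀` and `√Λ₀ h^{1/2} ≤ h^{1/4}` (that is, `Λ₀² h ≤ 1`, the
choice of `δ`) give `√Λ₀ d ≤ l`, i.e. `a d ≤ 1`. With it, on `[-d, d]` the drop in curvature
lifts the parabola by at most `λ / 2` and the widening lowers it by at most `μ`, so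
`φ_{h,i} - φ_{h,i-1}` lies in `[λ - μ, 3λ/2]`.
-/

open Set

/-- l_{h,i} = Λ₀ h (i-1) + α h^{1/4}. -/
noncomputable def lhi (Λ₀ α h : ℝ) (i : ℕ) : ℝ :=
  Λ₀ * h * ((i:ℝ) - 1) + α * h ^ ((1:ℝ)/4)

/-- d_{h,i} = 2η h (i-1) + α h^{1/2}. -/
noncomputable def dhi (η α h : ℝ) (i : ℕ) : ℝ :=
  2 * η * h * ((i:ℝ) - 1) + α * h ^ ((1:ℝ)/2)

/-- φ_{h,i}(t) = (a_{h,i}/2)(t² - d_{h,i}²) + l_{h,i} with a_{h,i} = Λ₀^{1/2}/l_{h,i}. -/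
noncomputable def phihi (Λ₀ η α h : ℝ) (i : ℕ) (t : ℝ) : ℝ :=
  (Real.sqrt Λ₀ / lhi Λ₀ α h i) / 2 * (t^2 - (dhi η α h i)^2) + lhi Λ₀ α h i

noncomputable def parabola (s L D t : ℝ) : ℝ :=
  s / L / 2 * (t ^ 2 - D ^ 2) + L

section Parabola

variable {s L D l m t : ℝ}

theorem parabola_add_sub_parabola (s L D l m t : ℝ) :
    parabola s (L + l) (D + m) t - parabola s L D t =
      l + (s / L - s / (L + l)) / 2 * (D ^ 2 - t ^ 2)
        - s / (L + l) / 2 * ((D + m) ^ 2 - D ^ 2) := by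
  unfold parabola
  ring

theorem curvature_drop_mul_sq_le (hs : 1 ≤ s) (hL : 0 < L) (hl : 0 ≤ l) (hD : 0 ≤ D)
    (hDL : s * D ≤ L) : (s / L - s / (L + l)) * D ^ 2 ≤ l := by
  have hLl : 0 < L + l := by linarith
  have hsD : s * D ^ 2 ≤ L * (L + l) :=
    calc s * D ^ 2 ≤ (s * D) ^ 2 := by nlinarith [sq_nonneg D]
      _ ≤ L ^ 2 := pow_le_pow_left₀ (by positivity) hDL 2
      _ ≤ L * (L + l) := by nlinarith
  have hdrop : (s / L - s / (L + l)) * D ^ 2 = l * (s * D ^ 2 / (L * (L + l))) := by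
    field_simp
    ring
  rw [hdrop]
  exact mul_le_of_le_one_right hl ((div_le_one (by positivity)).2 hsD)

theorem curvature_drop_nonneg (hs : 0 ≤ s) (hL : 0 < L) (hl : 0 ≤ l) :
    0 ≤ s / L - s / (L + l) :=
  sub_nonneg.2 (div_le_div_of_nonneg_left hs hL (by linarith))

theorem curvature_mul_sq_add_sub_sq_le (hs : 0 ≤ s) (hL : 0 < L) (hm : 0 ≤ m)
    (hDL : s * (D + m) ≤ L) : s / L * ((D + m) ^ 2 - D ^ 2) ≤ 2 * m := by
  have hwiden : (D + m) ^ 2 - D ^ 2 ≤ 2 * m * (D + m) := by nlinarith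
  calc s / L * ((D + m) ^ 2 - D ^ 2) ≤ s / L * (2 * m * (D + m)) :=
        mul_le_mul_of_nonneg_left hwiden (by positivity)
    _ = 2 * m * (s * (D + m) / L) := by ring
    _ ≤ 2 * m := mul_le_of_le_one_right (by positivity) ((div_le_one hL).2 hDL)

theorem abs_parabola_add_sub_parabola_le (hs : 1 ≤ s) (hL : 0 < L) (hD : 0 ≤ D) (hm : 0 ≤ m)
    (hml : m ≤ l) (hDL : s * D ≤ L) (hDL' : s * (D + m) ≤ L + l) (ht : t ^ 2 ≤ D ^ 2) :
    |parabola s (L + l) (D + m) t - parabola s L D t| ≤ 2 * l := by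
  have hl : 0 ≤ l := hm.trans hml
  have hLl : 0 < L + l := by linarith
  have hdrop := curvature_drop_nonneg (s := s) (by linarith) hL hl
  have hdrop_le := curvature_drop_mul_sq_le hs hL hl hD hDL
  have hwiden := curvature_mul_sq_add_sub_sq_le (by linarith) hLl hm hDL'
  have hdrop_t : 0 ≤ (s / L - s / (L + l)) * (D ^ 2 - t ^ 2) :=
    mul_nonneg hdrop (sub_nonneg.2 ht)
  have hdrop_t_le : (s / L - s / (L + l)) * (D ^ 2 - t ^ 2) ≤ l :=
    (mul_le_mul_of_nonneg_left (sub_le_self _ (sq_nonneg t)) hdrop).trans hdrop_le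
  have hwiden_nonneg : 0 ≤ s / (L + l) * ((D + m) ^ 2 - D ^ 2) :=
    mul_nonneg (by positivity) (by nlinarith)
  rw [parabola_add_sub_parabola, abs_le]
  constructor <;> linarith

end Parabola

theorem mul_rpow_half_le_rpow_quarter {c h : ℝ} (hc : 0 ≤ c) (hh : 0 ≤ h)
    (hch : c ^ 4 * h ≤ 1) : c * h ^ ((1 : ℝ) / 2) ≤ h ^ ((1 : ℝ) / 4) := by
  set q := h ^ ((1 : ℝ) / 4)
  have hq : 0 ≤ q := Real.rpow_nonneg hh _
  have hq4 : q ^ 4 = h := by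
    rw [← Real.rpow_natCast, ← Real.rpow_mul hh]
    norm_num
  have hhalf : h ^ ((1 : ℝ) / 2) = q ^ 2 := by
    rw [← Real.rpow_natCast, ← Real.rpow_mul hh]
    norm_num
  have hcq : c * q ≤ 1 :=
    (pow_le_one_iff_of_nonneg (mul_nonneg hc hq) four_ne_zero).1 (by rwa [mul_pow, hq4])
  rw [hhalf]
  nlinarith

theorem lhi_succ (Λ₀ α h : ℝ) (j : ℕ) : lhi Λ₀ α h (j + 1) = lhi Λ₀ α h j + Λ₀ * h := by
  unfold lhi
  push_cast
  ring

theorem dhi_succ (η α h : ℝ) (j : ℕ) : dhi η α h (j + 1) = dhi η α h j + 2 * η * h := by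
  unfold dhi
  push_cast
  ring

section Widths

variable {Λ₀ η α h : ℝ}

theorem phihi_eq_parabola (i : ℕ) (t : ℝ) :
    phihi Λ₀ η α h i t = parabola √Λ₀ (lhi Λ₀ α h i) (dhi η α h i) t :=
  rfl

theorem lhi_pos (hΛ : 0 ≤ Λ₀) (hα : 0 < α) (hh : 0 < h) {j : ℕ} (hj : 1 ≤ j) :
    0 < lhi Λ₀ α h j := by
  have hj' : (0 : ℝ) ≤ (j : ℝ) - 1 := sub_nonneg.2 (Nat.one_le_cast.2 hj)
  unfold lhi
  have := Real.rpow_pos_of_pos hh ((1 : ℝ) / 4)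
  positivity

theorem dhi_nonneg (hη : 0 ≤ η) (hα : 0 ≤ α) (hh : 0 ≤ h) {j : ℕ} (hj : 1 ≤ j) :
    0 ≤ dhi η α h j := by
  have hj' : (0 : ℝ) ≤ (j : ℝ) - 1 := sub_nonneg.2 (Nat.one_le_cast.2 hj)
  unfold dhi
  have := Real.rpow_nonneg hh ((1 : ℝ) / 2)
  positivity

theorem sqrt_mul_dhi_le_lhi (hη : 0 ≤ η) (hα : 0 ≤ α) (hh : 0 ≤ h) (hΛη : 4 * η ^ 2 ≤ Λ₀)
    (hΛh : Λ₀ ^ 2 * h ≤ 1) {j : ℕ} (hj : 1 ≤ j) :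
    √Λ₀ * dhi η α h j ≤ lhi Λ₀ α h j := by
  have hΛ : 0 ≤ Λ₀ := le_trans (by positivity) hΛη
  have hj' : (0 : ℝ) ≤ (j : ℝ) - 1 := sub_nonneg.2 (Nat.one_le_cast.2 hj)
  have hss : √Λ₀ * √Λ₀ = Λ₀ := Real.mul_self_sqrt hΛ
  have hηs : 2 * η ≤ √Λ₀ := (Real.le_sqrt (by positivity) hΛ).2 (by linarith)
  have hslope : √Λ₀ * (2 * η) ≤ Λ₀ :=
    (mul_le_mul_of_nonneg_left hηs (Real.sqrt_nonneg Λ₀)).trans_eq hss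
  have hroot : √Λ₀ * h ^ ((1 : ℝ) / 2) ≤ h ^ ((1 : ℝ) / 4) :=
    mul_rpow_half_le_rpow_quarter (Real.sqrt_nonneg _) hh (by
      rwa [show √Λ₀ ^ 4 = (√Λ₀ * √Λ₀) ^ 2 by ring, hss])
  unfold dhi lhi
  calc √Λ₀ * (2 * η * h * ((j : ℝ) - 1) + α * h ^ ((1 : ℝ) / 2))
        = √Λ₀ * (2 * η) * (h * ((j : ℝ) - 1)) + α * (√Λ₀ * h ^ ((1 : ℝ) / 2)) := by ring
    _ ≤ Λ₀ * (h * ((j : ℝ) - 1)) + α * h ^ ((1 : ℝ) / 4) := by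
        gcongr
    _ = Λ₀ * h * ((j : ℝ) - 1) + α * h ^ ((1 : ℝ) / 4) := by ring

end Widths

theorem consecutive_parabolas_close_general
    (η α Λ₀ : ℝ) (hη : 0 < η) (hα : 0 < α)
    (hΛ1 : 1 ≤ Λ₀) (hΛη : 2 * η ≤ Λ₀) (hΛη2 : 4 * η^2 ≤ Λ₀) :
    ∃ δ : ℝ, 0 < δ ∧ ∀ h : ℝ, 0 < h → h ≤ δ →
      ∀ i : ℕ, 2 ≤ i → (i : ℝ) ≤ δ / h + 1 →
        ∀ t ∈ Set.Icc (-(dhi η α h (i-1))) (dhi η α h (i-1)),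
          |phihi Λ₀ η α h i t - phihi Λ₀ η α h (i-1) t| ≤ 2 * Λ₀ * h := by
  have hΛ : 0 < Λ₀ := by linarith
  refine ⟨(Λ₀ ^ 2)⁻¹, by positivity, fun h hh hδ i hi _ t ht => ?_⟩
  have hΛh : Λ₀ ^ 2 * h ≤ 1 := by
    simpa [hΛ.ne'] using mul_le_mul_of_nonneg_left hδ (sq_nonneg Λ₀)
  obtain ⟨j, rfl⟩ : ∃ j, i = j + 1 := ⟨i - 1, by omega⟩
  have hj : 1 ≤ j := by omega
  have hwidth (k : ℕ) (hk : 1 ≤ k) : √Λ₀ * dhi η α h k ≤ lhi Λ₀ α h k :=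
    sqrt_mul_dhi_le_lhi hη.le hα.le hh.le hΛη2 hΛh hk
  have hnext := hwidth (j + 1) (by omega)
  rw [Nat.add_sub_cancel] at ht ⊢
  rw [phihi_eq_parabola, phihi_eq_parabola, lhi_succ, dhi_succ, mul_assoc 2 Λ₀ h]
  rw [lhi_succ, dhi_succ] at hnext
  exact abs_parabola_add_sub_parabola_le (Real.one_le_sqrt.2 hΛ1) (lhi_pos hΛ.le hα hh hj)
    (dhi_nonneg hη.le hα.le hh.le hj) (by positivity) (mul_le_mul_of_nonneg_right hΛη hh.le)
    (hwidth j hj) hnext (sq_le_sq' ht.1 ht.2)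

/-- For Λ₀ ≥ max{2η, 4η², 1} and δ > 0 small enough (depending on α, η, Λ₀),
for all 0 < h ≤ δ and 2 ≤ i ≤ ⌊δ/h⌋ + 1 we have
|φ_{h,i}(t) - φ_{h,i-1}(t)| ≤ 2Λ₀ h for all t ∈ [-d_{h,i-1}, d_{h,i-1}]. -/
theorem consecutive_parabolas_close
    (r η α Λ₀ : ℝ) (hr : 0 < r) (hη : 0 < η) (hα : 0 < α)
    (hΛ1 : 1 ≤ Λ₀) (hΛη : 2 * η ≤ Λ₀) (hΛη2 : 4 * η^2 ≤ Λ₀) :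
    ∃ δ : ℝ, 0 < δ ∧ ∀ h : ℝ, 0 < h → h ≤ δ →
      ∀ i : ℕ, 2 ≤ i → (i : ℝ) ≤ δ / h + 1 →
        ∀ t ∈ Set.Icc (-(dhi η α h (i-1))) (dhi η α h (i-1)),
          |phihi Λ₀ η α h i t - phihi Λ₀ η α h (i-1) t| ≤ 2 * Λ₀ * h :=
  consecutive_parabolas_close_general η α Λ₀ hη hα hΛ1 hΛη hΛη2
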